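/- (Non-B-robustness of the minimum RP estimators: unboundedness of the RP score in the covariates.) Fix α ≥ 0 and a parameter β of the PLRM, and suppose there exists a sequence (x_n) in ℝ^{k+1} with ‖x_n‖₂ → ∞ and π_1(x_n,β) = 1/2 for all n. Then ‖Ψ_α(β, x_n, e_1)‖₂ → ∞ as n → ∞, where e_1 is the first standard basis vector of ℝ^{d+1}. In particular the score function Ψ_α(β,·,·), and hence the influence function of the minimum RP estimator, is unbounded in the covariate. -/

import Mathlib

/-!
Write `p = π_1(x, β)` and `Γ = Γ(α)`. For `y = e_1` the first block of the score is
`Γ^{-α/(1+α)} p^α (1 - p^{α+1}/Γ) x`. Since the probabilities sum to one, `Γ ≤ 1`, so the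
prefactor is at least `1`, and some other class has probability at least `(1 - p)/d`, so
`1 - p^{α+1}/Γ ≥ Γ - p^{α+1} ≥ ((1 - p)/d)^{α+1}`. With `p = 1/2` the first block is therefore
at least a fixed positive multiple of `x` in norm, and so is the whole score.
-/

open Matrix Filter

noncomputable section

/-- PLRM probabilities. -/
def plrmPi {d k : ℕ} (x : Fin (k + 1) → ℝ) (β : Fin d → Fin (k + 1) → ℝ)
    (j : Fin (d + 1)) : ℝ :=
  (if h : (j : ℕ) < d then Real.exp (∑ t, x t * β ⟨j, h⟩ t) else 1) /
    (1 + ∑ s : Fin d, Real.exp (∑ t, x t * β s t))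

/-- `Γ(α) = ∑_{j=1}^{d+1} π_j(x,β)^{α+1}`. -/
def Gam {d k : ℕ} (α : ℝ) (x : Fin (k + 1) → ℝ) (β : Fin d → Fin (k + 1) → ℝ) : ℝ :=
  ∑ j, plrmPi x β j ^ (α + 1)

/-- `Υ(α,y) = ∑_{j=1}^{d+1} π_j(x,β)^α y_j`. -/
def Ups {d k : ℕ} (α : ℝ) (x : Fin (k + 1) → ℝ) (β : Fin d → Fin (k + 1) → ℝ)
    (y : Fin (d + 1) → ℝ) : ℝ :=
  ∑ j, plrmPi x β j ^ α * y j

/-- The RP score `Ψ_α(β,x,y) ∈ ℝ^{d(k+1)}`, indexed by block `m` and coordinate `t`. -/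
def psiVec {d k : ℕ} (α : ℝ) (x : Fin (k + 1) → ℝ) (β : Fin d → Fin (k + 1) → ℝ)
    (y : Fin (d + 1) → ℝ) : Fin d × Fin (k + 1) → ℝ :=
  fun p =>
    Gam α x β ^ (-(α / (1 + α))) *
      (plrmPi x β p.1.castSucc ^ α * y p.1.castSucc -
        Ups α x β y / Gam α x β * plrmPi x β p.1.castSucc ^ (α + 1)) * x p.2

lemma mul_sqrt_sum_sq_le_sqrt_sum_sq_mul {κ : Type*} [Fintype κ] {a c : ℝ} (hc : 0 ≤ c)
    (hca : c ≤ a) (x : κ → ℝ) : c * √(∑ t, x t ^ 2) ≤ √(∑ t, (a * x t) ^ 2) := by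
  simp only [mul_pow, ← Finset.mul_sum]
  rw [Real.sqrt_mul (sq_nonneg a), Real.sqrt_sq (hc.trans hca)]
  gcongr

lemma sqrt_sum_sq_slice_le_sqrt_sum_sq {ι κ : Type*} [Fintype ι] [Fintype κ] (f : ι × κ → ℝ)
    (i : ι) : √(∑ t, f (i, t) ^ 2) ≤ √(∑ p, f p ^ 2) := by
  rw [Fintype.sum_prod_type]
  gcongr
  exact Finset.single_le_sum (f := fun i' => ∑ t, f (i', t) ^ 2)
    (fun _ _ => Finset.sum_nonneg fun _ _ => sq_nonneg _) (Finset.mem_univ i)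

section

variable {d k : ℕ} (x : Fin (k + 1) → ℝ) (β : Fin d → Fin (k + 1) → ℝ)

lemma plrmPi_pos (j : Fin (d + 1)) : 0 < plrmPi x β j := by
  unfold plrmPi
  split <;> positivity

lemma sum_plrmPi : ∑ j, plrmPi x β j = 1 := by
  have hden : 0 < 1 + ∑ s : Fin d, Real.exp (∑ t, x t * β s t) := by positivity
  rw [Fin.sum_univ_castSucc]
  simp only [plrmPi, Fin.val_castSucc, Fin.is_lt, dite_true, Fin.val_last, lt_irrefl, dite_false,
    Fin.eta, ← Finset.sum_div]
  rw [← add_div, div_eq_one_iff_eq hden.ne', add_comm]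

lemma plrmPi_le_one (j : Fin (d + 1)) : plrmPi x β j ≤ 1 :=
  sum_plrmPi x β ▸
    Finset.single_le_sum (fun i _ => (plrmPi_pos x β i).le) (Finset.mem_univ j)

lemma exists_ne_plrmPi_ge (hd : 0 < d) (j : Fin (d + 1)) :
    ∃ i ≠ j, (1 - plrmPi x β j) / d ≤ plrmPi x β i := by
  have hne : (Finset.univ.erase j).Nonempty := by
    rw [← Finset.card_pos, Finset.card_erase_of_mem (Finset.mem_univ j), Finset.card_univ,
      Fintype.card_fin]
    omega
  have hsum : ∑ i ∈ Finset.univ.erase j, plrmPi x β i = 1 - plrmPi x β j := by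
    rw [← sum_plrmPi x β, ← Finset.sum_erase_add _ _ (Finset.mem_univ j), add_sub_cancel_right]
  obtain ⟨i, hi, hle⟩ := Finset.exists_le_of_sum_le hne
    (f := fun _ => (1 - plrmPi x β j) / d) (g := plrmPi x β) (by
      rw [Finset.sum_const, Finset.card_erase_of_mem (Finset.mem_univ j), Finset.card_univ,
        Fintype.card_fin, hsum, add_tsub_cancel_right, nsmul_eq_mul,
        mul_div_cancel₀ _ (by exact_mod_cast hd.ne')])
  exact ⟨i, Finset.ne_of_mem_erase hi, hle⟩

lemma Gam_pos (α : ℝ) : 0 < Gam α x β :=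
  Finset.sum_pos (fun j _ => Real.rpow_pos_of_pos (plrmPi_pos x β j) _) Finset.univ_nonempty

lemma Gam_le_one {α : ℝ} (hα : 0 ≤ α) : Gam α x β ≤ 1 :=
  calc Gam α x β ≤ ∑ j, plrmPi x β j := Finset.sum_le_sum fun j _ =>
        Real.rpow_le_self_of_le_one (plrmPi_pos x β j).le (plrmPi_le_one x β j) (by linarith)
    _ = 1 := sum_plrmPi x β

lemma one_le_Gam_rpow {α : ℝ} (hα : 0 ≤ α) : 1 ≤ Gam α x β ^ (-(α / (1 + α))) :=
  Real.one_le_rpow_of_pos_of_le_one_of_nonpos (Gam_pos x β α) (Gam_le_one x β hα)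
    (neg_nonpos.2 (by positivity))

lemma rpow_add_rpow_le_Gam {α : ℝ} (hα : 0 ≤ α + 1) (hd : 0 < d) (j : Fin (d + 1)) :
    plrmPi x β j ^ (α + 1) + ((1 - plrmPi x β j) / d) ^ (α + 1) ≤ Gam α x β := by
  obtain ⟨i, hij, hi⟩ := exists_ne_plrmPi_ge x β hd j
  have hnonneg : 0 ≤ (1 - plrmPi x β j) / d :=
    div_nonneg (sub_nonneg.2 (plrmPi_le_one x β j)) (Nat.cast_nonneg d)
  calc plrmPi x β j ^ (α + 1) + ((1 - plrmPi x β j) / d) ^ (α + 1)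
      ≤ plrmPi x β j ^ (α + 1) + plrmPi x β i ^ (α + 1) := by
        gcongr
    _ = ∑ l ∈ {j, i}, plrmPi x β l ^ (α + 1) :=
        (Finset.sum_pair (f := fun l => plrmPi x β l ^ (α + 1)) hij.symm).symm
    _ ≤ Gam α x β := Finset.sum_le_sum_of_subset_of_nonneg (Finset.subset_univ _)
        fun l _ _ => (Real.rpow_pos_of_pos (plrmPi_pos x β l) _).le

lemma Ups_single (α : ℝ) (j : Fin (d + 1)) :
    Ups α x β (Pi.single j 1) = plrmPi x β j ^ α := by
  simp [Ups, Pi.single_apply]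

def psiCoeff (α : ℝ) (m : Fin d) : ℝ :=
  Gam α x β ^ (-(α / (1 + α))) * plrmPi x β m.castSucc ^ α *
    (1 - plrmPi x β m.castSucc ^ (α + 1) / Gam α x β)

lemma psiVec_single_castSucc (α : ℝ) (m : Fin d) (t : Fin (k + 1)) :
    psiVec α x β (Pi.single m.castSucc 1) (m, t) = psiCoeff x β α m * x t := by
  simp only [psiVec, psiCoeff, Ups_single, Pi.single_eq_same]
  ring

lemma rpow_mul_rpow_le_psiCoeff {α : ℝ} (hα : 0 ≤ α) (hd : 0 < d) (m : Fin d) :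
    plrmPi x β m.castSucc ^ α * ((1 - plrmPi x β m.castSucc) / d) ^ (α + 1) ≤
      psiCoeff x β α m := by
  unfold psiCoeff
  set p := plrmPi x β m.castSucc
  set Γ := Gam α x β
  have hΓ : 0 < Γ := Gam_pos x β α
  have hpα : 0 ≤ p ^ α := (Real.rpow_pos_of_pos (plrmPi_pos x β _) α).le
  have hlow := rpow_add_rpow_le_Gam x β (α := α) (by linarith) hd m.castSucc
  have hq : 0 ≤ ((1 - p) / d) ^ (α + 1) := Real.rpow_nonneg
    (div_nonneg (sub_nonneg.2 (plrmPi_le_one x β _)) (Nat.cast_nonneg d)) _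
  have hgap : ((1 - p) / d) ^ (α + 1) ≤ 1 - p ^ (α + 1) / Γ :=
    calc ((1 - p) / d) ^ (α + 1) ≤ Γ - p ^ (α + 1) := by linarith
      _ ≤ (Γ - p ^ (α + 1)) / Γ := le_div_self (by linarith) hΓ (Gam_le_one x β hα)
      _ = 1 - p ^ (α + 1) / Γ := by rw [sub_div, div_self hΓ.ne']
  calc p ^ α * ((1 - p) / d) ^ (α + 1) ≤ p ^ α * (1 - p ^ (α + 1) / Γ) := by gcongr
    _ ≤ Γ ^ (-(α / (1 + α))) * p ^ α * (1 - p ^ (α + 1) / Γ) := by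
        rw [mul_assoc]
        exact le_mul_of_one_le_left (mul_nonneg hpα (hq.trans hgap))
          (one_le_Gam_rpow x β hα)

lemma mul_sqrt_sum_sq_le_sqrt_sum_sq_psiVec {α c : ℝ} (hα : 0 ≤ α) (hd : 0 < d) (m : Fin d)
    (hc : 0 ≤ c)
    (hcm : c ≤ plrmPi x β m.castSucc ^ α * ((1 - plrmPi x β m.castSucc) / d) ^ (α + 1)) :
    c * √(∑ t, x t ^ 2) ≤
      √(∑ p : Fin d × Fin (k + 1), psiVec α x β (Pi.single m.castSucc 1) p ^ 2) := by
  have hcoeff := hcm.trans (rpow_mul_rpow_le_psiCoeff x β hα hd m)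
  calc c * √(∑ t, x t ^ 2) ≤ √(∑ t, (psiCoeff x β α m * x t) ^ 2) :=
        mul_sqrt_sum_sq_le_sqrt_sum_sq_mul hc hcoeff x
    _ = √(∑ t, psiVec α x β (Pi.single m.castSucc 1) (m, t) ^ 2) := by
        simp only [psiVec_single_castSucc]
    _ ≤ _ := sqrt_sum_sq_slice_le_sqrt_sum_sq _ m

end

theorem statement17_general (d k : ℕ) (hd : 1 ≤ d) (α : ℝ) (hα : 0 ≤ α)
    (β : Fin d → Fin (k + 1) → ℝ) (X : ℕ → Fin (k + 1) → ℝ)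
    (hnorm : Tendsto (fun n => Real.sqrt (∑ t, X n t ^ 2)) atTop atTop)
    (hhalf : ∀ n, plrmPi (X n) β 0 = 1 / 2) :
    Tendsto (fun n => Real.sqrt (∑ p : Fin d × Fin (k + 1),
        psiVec α (X n) β (Pi.single (0 : Fin (d + 1)) 1) p ^ 2)) atTop atTop := by
  have hd0 : 0 < d := hd
  set c : ℝ := (1 / 2 : ℝ) ^ α * ((1 - 1 / 2) / d) ^ (α + 1)
  have hc : 0 < c := by positivity
  have hcast : (⟨0, hd0⟩ : Fin d).castSucc = 0 := rfl
  refine tendsto_atTop_mono (fun n => ?_) (hnorm.const_mul_atTop hc)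
  have := mul_sqrt_sum_sq_le_sqrt_sum_sq_psiVec (X n) β hα hd0 ⟨0, hd0⟩ hc.le
    (by rw [hcast, hhalf n])
  rwa [hcast] at this

/-- non-B-robustness of the minimum RP estimators: fix `α ≥ 0` and a
parameter `β`; if `(x_n)` is a sequence of covariates with `‖x_n‖₂ → ∞` and
`π_1(x_n,β) = 1/2` for all `n`, then `‖Ψ_α(β,x_n,e_1)‖₂ → ∞`. -/
theorem statement17 (d k : ℕ) (hd : 1 ≤ d) (hk : 1 ≤ k) (α : ℝ) (hα : 0 ≤ α)
    (β : Fin d → Fin (k + 1) → ℝ) (X : ℕ → Fin (k + 1) → ℝ)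
    (hnorm : Tendsto (fun n => Real.sqrt (∑ t, X n t ^ 2)) atTop atTop)
    (hhalf : ∀ n, plrmPi (X n) β 0 = 1 / 2) :
    Tendsto (fun n => Real.sqrt (∑ p : Fin d × Fin (k + 1),
        psiVec α (X n) β (Pi.single (0 : Fin (d + 1)) 1) p ^ 2)) atTop atTop :=
  statement17_general d k hd α hα β X hnorm hhalf

end
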